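/- Let A be a list of natural numbers of length n ≥ 1 with C(A) = 1. Let M be the maximum of C(A[1..i]) over prefixes A[1..i] for i = 1, …, n, and let k be the least index i with C(A[1..i]) = M. Then the list (drop k A) ++ (take k A), i.e., A[k+1..n] ++ A[1..k], is a well-formed expression. (This is the correctness of the rotation point found by the algorithm Get-Random-Tree.) -/

import Mathlib

/-- `C v` is the length of `v` minus the sum of its entries. -/
def C (v : List ℕ) : ℤ := (v.length : ℤ) - (v.sum : ℤ)

/-- A list of natural numbers is a well-formed expression (Polish notation
encoding of an ordered rooted tree by outdegrees) if it is of the form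
`d :: (w₁ ++ ⋯ ++ w_d)` where each `wᵢ` is a well-formed expression. -/
inductive IsWF : List ℕ → Prop
  | node (d : ℕ) (ws : List (List ℕ)) (hlen : ws.length = d)
      (h : ∀ w ∈ ws, IsWF w) : IsWF (d :: ws.flatten)

/-- The `k`-rotation of `s = u ++ v` with `v` of length `k` is `v ++ u`. -/
def krot (k : ℕ) (s : List ℕ) : List ℕ :=
  s.drop (s.length - k) ++ s.take (s.length - k)

/-!
A list is a well-formed expression as soon as `C` of the whole list is `1` and `C` of every proper
prefix is at most `0`. More generally, a list `t` with `C t = d` whose proper prefixes all have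
`C < d` is the concatenation of `d` well-formed expressions: writing `t = a :: s`, the tail `s`
splits into `d - 1 + a` expressions, and the head `a` takes the first `a` of them as its children.

If `k` is the first index where the prefix sums `C (A[1..i])` reach their maximum `M ≥ 1`, then in
`A[k+1..n] ++ A[1..k]` a prefix inside `A[k+1..n]` has `C ≤ M - M = 0`, and a longer one has
`C = (1 - M) + C (A[1..j])` with `j < k`, hence `C < 1 - M + M = 1`.
-/

lemma C_nil : C [] = 0 := by
  simp [C]

lemma C_append (u v : List ℕ) : C (u ++ v) = C u + C v := by
  simp only [C, List.length_append, List.sum_append]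
  push_cast
  ring

lemma C_cons (a : ℕ) (t : List ℕ) : C (a :: t) = 1 - a + C t := by
  simp only [C, List.length_cons, List.sum_cons]
  push_cast
  ring

lemma C_take_add (A : List ℕ) (k i : ℕ) :
    C (A.take (k + i)) = C (A.take k) + C ((A.drop k).take i) := by
  rw [List.take_add, C_append]

lemma exists_flatten_eq_of_C_take_lt (t : List ℕ) (d : ℕ) (hC : C t = d)
    (hpre : ∀ i < t.length, C (t.take i) < d) :
    ∃ ws : List (List ℕ), ws.length = d ∧ (∀ w ∈ ws, IsWF w) ∧ ws.flatten = t := by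
  induction t generalizing d with
  | nil =>
    have hd : d = 0 := by rw [C_nil] at hC; omega
    exact ⟨[], hd.symm, by simp, rfl⟩
  | cons a s ih =>
    obtain ⟨e, rfl⟩ : ∃ e, d = e + 1 := by
      have := hpre 0 (by simp)
      rw [List.take_zero, C_nil] at this
      exact Nat.exists_eq_add_one.mpr (by exact_mod_cast this)
    have hCs : C s = ↑(e + a) := by rw [C_cons] at hC; push_cast at hC ⊢; linarith
    have hpre_s : ∀ i < s.length, C (s.take i) < ↑(e + a) := by
      intro i hi
      have := hpre (i + 1) (by simpa using hi)
      rw [List.take_succ_cons, C_cons] at this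
      push_cast at this ⊢
      linarith
    obtain ⟨ws, hlen, hwf, hflat⟩ := ih (e + a) hCs hpre_s
    refine ⟨(a :: (ws.take a).flatten) :: ws.drop a, ?_, ?_, ?_⟩
    · simp [hlen]
    · intro w hw
      rcases List.mem_cons.mp hw with rfl | hw
      · exact IsWF.node a _ (by simp [hlen]) fun w hw => hwf w (List.mem_of_mem_take hw)
      · exact hwf w (List.mem_of_mem_drop hw)
    · rw [List.flatten_cons, List.cons_append, ← List.flatten_append, List.take_append_drop,
        hflat]

lemma isWF_of_C_take_lt_one (B : List ℕ) (hC : C B = 1)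
    (hpre : ∀ i < B.length, C (B.take i) < 1) : IsWF B := by
  obtain ⟨ws, hlen, hwf, hflat⟩ := exists_flatten_eq_of_C_take_lt B 1 hC hpre
  obtain ⟨w, rfl⟩ := List.length_eq_one_iff.mp hlen
  simpa [← hflat] using hwf w (by simp)

lemma C_take_drop_append_take_lt_one (A : List ℕ) (k : ℕ) (hkn : k ≤ A.length) (hC : C A = 1)
    (hmax : ∀ i ≤ A.length, C (A.take i) ≤ C (A.take k))
    (hlt : ∀ i < k, C (A.take i) < C (A.take k)) :
    ∀ i < (A.drop k ++ A.take k).length, C ((A.drop k ++ A.take k).take i) < 1 := by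
  intro i hi
  have hCdrop : C (A.drop k) = 1 - C (A.take k) := by
    rw [← hC, ← List.take_append_drop k A, C_append, List.take_append_drop]
    ring
  simp only [List.length_append, List.length_drop, List.length_take, min_eq_left hkn] at hi
  rw [List.take_append, C_append, List.length_drop, List.take_take]
  by_cases hi' : i ≤ A.length - k
  · have hmax_ki := hmax (k + i) (by omega)
    rw [C_take_add] at hmax_ki
    rw [Nat.sub_eq_zero_of_le hi', Nat.zero_min, List.take_zero, C_nil]
    linarith
  · rw [List.take_of_length_le (by simp; omega), hCdrop, min_eq_left (by omega)]
    linarith [hlt (i - (A.length - k)) (by omega)]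

theorem stmt_9_general (A : List ℕ) (hn : 1 ≤ A.length) (hC : C A = 1)
    (M : ℤ) (k : ℕ) (hkn : k ≤ A.length)
    (hkM : C (A.take k) = M)
    (hmax : ∀ i : ℕ, 1 ≤ i → i ≤ A.length → C (A.take i) ≤ M)
    (hleast : ∀ i : ℕ, 1 ≤ i → i < k → C (A.take i) ≠ M) :
    IsWF (A.drop k ++ A.take k) := by
  have hM : 1 ≤ M := by simpa [hC] using hmax A.length hn le_rfl
  have hmax' : ∀ i ≤ A.length, C (A.take i) ≤ C (A.take k) := by
    intro i hi
    rcases Nat.eq_zero_or_pos i with rfl | hi0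
    · rw [List.take_zero, C_nil]; omega
    · exact hkM ▸ hmax i hi0 hi
  have hlt : ∀ i < k, C (A.take i) < C (A.take k) := by
    intro i hik
    rcases Nat.eq_zero_or_pos i with rfl | hi0
    · rw [List.take_zero, C_nil]; omega
    · exact lt_of_le_of_ne (hmax' i (by omega)) (hkM ▸ hleast i hi0 hik)
  refine isWF_of_C_take_lt_one _ ?_ (C_take_drop_append_take_lt_one A k hkn hC hmax' hlt)
  rw [C_append, add_comm, ← C_append, List.take_append_drop, hC]

theorem stmt_9 (A : List ℕ) (hn : 1 ≤ A.length) (hC : C A = 1)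
    (M : ℤ) (k : ℕ) (hk1 : 1 ≤ k) (hkn : k ≤ A.length)
    (hkM : C (A.take k) = M)
    (hmax : ∀ i : ℕ, 1 ≤ i → i ≤ A.length → C (A.take i) ≤ M)
    (hleast : ∀ i : ℕ, 1 ≤ i → i < k → C (A.take i) ≠ M) :
    IsWF (A.drop k ++ A.take k) :=
  stmt_9_general A hn hC M k hkn hkM hmax hleast
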